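/- arXiv:1810.08733 — 2 statements merged into one kernel-verified Lean document; each statement's English description precedes it below -/
import Mathlib

section
/- Let Γ ⊆ X be non-recurrent and let Λ ⊆ ℂ contain 0 and at least one element λ* with Re(λ*) ≠ 0. Then the family of eigenfunctions generated by pairs (λ, g) with λ ∈ Λ and g : Γ → ℂ continuous separates the points of X_T: for any x₁, x₂ ∈ X_T with x₁ ≠ x₂, there exist λ ∈ Λ and a continuous g : Γ → ℂ such that the eigenfunction φ generated by (λ, g) satisfies φ(x₁) ≠ φ(x₂). -/
/-- A set `Γ` is non-recurrent (for the flow `S` on the time horizon `T`) if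
no point of `Γ` returns to `Γ` within time `(0, T]`. -/
def nonrecurrent {X : Type*} (S : ℝ → X → X) (T : ℝ) (Γ : Set X) : Prop :=
  ∀ x ∈ Γ, ∀ t : ℝ, 0 < t → t ≤ T → S t x ∉ Γ

/-- `X_T`: the image of `Γ` under the flow over the time interval `[0, T]`. -/
def flowImage {X : Type*} (S : ℝ → X → X) (T : ℝ) (Γ : Set X) : Set X :=
  {x | ∃ s ∈ Set.Icc (0:ℝ) T, ∃ x₀ ∈ Γ, S s x₀ = x}

/-- `φ` is the eigenfunction generated by `(λ, g)`:
`φ(S(s, x₀)) = e^{λ s} g(x₀)` for all `x₀ ∈ Γ` and `s ∈ [0, T]`. -/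
def IsEigOn {X : Type*} (S : ℝ → X → X) (T : ℝ) (Γ : Set X) (lam : ℂ) (g : Γ → ℂ)
    (φ : X → ℂ) : Prop :=
  ∀ (x₀ : Γ) (s : ℝ), s ∈ Set.Icc (0:ℝ) T →
    φ (S s (x₀ : X)) = Complex.exp (lam * (s : ℂ)) * g x₀

/-!
Non-recurrence makes `(s, x₀) ↦ S s x₀` injective on `[0, T] × Γ`, so every pair `(λ, g)`
generates an eigenfunction. Two points of `X_T` at the same time `s` are separated by `λ = 0`
and a continuous `g` separating their base points; two points at different times are separated
by `λ*` and `g = 1`, since `|e^{λ* s}| = e^{Re λ* · s}` is injective in `s`.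
-/

open Set Function

section Flow

variable {X : Type*} {S : ℝ → X → X} {T : ℝ} {Γ : Set X}

theorem eq_flow_sub_of_flow_eq (hS0 : ∀ x, S 0 x = x)
    (hSadd : ∀ s t : ℝ, ∀ x, S (t + s) x = S t (S s x)) {a b : ℝ} {u v : X}
    (h : S a u = S b v) : u = S (b - a) v :=
  calc u = S (-a + a) u := by rw [neg_add_cancel, hS0]
    _ = S (-a) (S b v) := by rw [hSadd, h]
    _ = S (b - a) v := by rw [← hSadd, neg_add_eq_sub]

theorem nonrecurrent.eq_of_flow_eq (hS0 : ∀ x, S 0 x = x)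
    (hSadd : ∀ s t : ℝ, ∀ x, S (t + s) x = S t (S s x)) (hΓ : nonrecurrent S T Γ)
    {s₁ s₂ : ℝ} (hs₁ : s₁ ∈ Icc 0 T) (hs₂ : s₂ ∈ Icc 0 T) {y₁ y₂ : X}
    (hy₁ : y₁ ∈ Γ) (hy₂ : y₂ ∈ Γ) (h : S s₁ y₁ = S s₂ y₂) : s₁ = s₂ ∧ y₁ = y₂ := by
  wlog hle : s₁ ≤ s₂ generalizing s₁ s₂ y₁ y₂
  · obtain ⟨hs, hy⟩ := this hs₂ hs₁ hy₂ hy₁ h.symm (le_of_not_ge hle)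
    exact ⟨hs.symm, hy.symm⟩
  have hy₁' : y₁ = S (s₂ - s₁) y₂ := eq_flow_sub_of_flow_eq hS0 hSadd h
  obtain hlt | rfl := hle.lt_or_eq
  · exact absurd (hy₁' ▸ hy₁) (hΓ y₂ hy₂ _ (sub_pos.2 hlt) (by linarith [hs₁.1, hs₂.2]))
  · rw [hy₁', sub_self, hS0]
    exact ⟨rfl, rfl⟩

theorem nonrecurrent.injective_flow (hS0 : ∀ x, S 0 x = x)
    (hSadd : ∀ s t : ℝ, ∀ x, S (t + s) x = S t (S s x)) (hΓ : nonrecurrent S T Γ) :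
    Injective fun p : Icc (0 : ℝ) T × Γ => S p.1 p.2 := by
  rintro ⟨⟨s₁, hs₁⟩, ⟨y₁, hy₁⟩⟩ ⟨⟨s₂, hs₂⟩, ⟨y₂, hy₂⟩⟩ h
  obtain ⟨rfl, rfl⟩ := hΓ.eq_of_flow_eq hS0 hSadd hs₁ hs₂ hy₁ hy₂ h
  rfl

noncomputable def eigenfunction (S : ℝ → X → X) (T : ℝ) (Γ : Set X) (lam : ℂ) (g : Γ → ℂ) :
    X → ℂ :=
  extend (fun p : Icc (0 : ℝ) T × Γ => S p.1 p.2)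
    (fun p => Complex.exp (lam * (p.1 : ℝ)) * g p.2) 0

theorem nonrecurrent.isEigOn_eigenfunction (hS0 : ∀ x, S 0 x = x)
    (hSadd : ∀ s t : ℝ, ∀ x, S (t + s) x = S t (S s x)) (hΓ : nonrecurrent S T Γ)
    (lam : ℂ) (g : Γ → ℂ) : IsEigOn S T Γ lam g (eigenfunction S T Γ lam g) :=
  fun x₀ s hs => (hΓ.injective_flow hS0 hSadd).extend_apply _ _ (⟨s, hs⟩, x₀)

end Flow

theorem Complex.exp_mul_ofReal_injective {lam : ℂ} (hlam : lam.re ≠ 0) :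
    Injective fun s : ℝ => Complex.exp (lam * s) := by
  intro s₁ s₂ h
  have hnorm := congrArg norm h
  simp only [Complex.norm_exp, Complex.re_mul_ofReal, Real.exp_eq_exp] at hnorm
  exact mul_left_cancel₀ hlam hnorm

theorem stmt13_general {X : Type*} [MetricSpace X] (S : ℝ → X → X)
    (hS0 : ∀ x, S 0 x = x)
    (hSadd : ∀ s t : ℝ, ∀ x, S (t + s) x = S t (S s x))
    (T : ℝ) (Γ : Set X)
    (hΓ : nonrecurrent S T Γ)
    (Λ : Set ℂ) (h0 : (0 : ℂ) ∈ Λ) (hre : ∃ z ∈ Λ, z.re ≠ 0) :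
    ∀ x₁ ∈ flowImage S T Γ, ∀ x₂ ∈ flowImage S T Γ, x₁ ≠ x₂ →
      ∃ lam ∈ Λ, ∃ g : Γ → ℂ, Continuous g ∧
        ∃ φ : X → ℂ, IsEigOn S T Γ lam g φ ∧ φ x₁ ≠ φ x₂ := by
  rintro _ ⟨s₁, hs₁, y₁, hy₁, rfl⟩ _ ⟨s₂, hs₂, y₂, hy₂, rfl⟩ hne
  have heig := hΓ.isEigOn_eigenfunction hS0 hSadd
  by_cases hs : s₁ = s₂
  · subst hs
    have hy : y₁ ≠ y₂ := fun h => hne (h ▸ rfl)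
    let g : Γ → ℂ := fun y => (dist (y : X) y₁ : ℂ)
    refine ⟨0, h0, g, by fun_prop, _, heig 0 g, ?_⟩
    rw [heig 0 g ⟨y₁, hy₁⟩ s₁ hs₁, heig 0 g ⟨y₂, hy₂⟩ s₁ hs₁]
    simpa [g, eq_comm] using hy
  · obtain ⟨lam, hlam, hlam_re⟩ := hre
    refine ⟨lam, hlam, fun _ => 1, continuous_const, _, heig lam _, ?_⟩
    rw [heig lam _ ⟨y₁, hy₁⟩ s₁ hs₁, heig lam _ ⟨y₂, hy₂⟩ s₂ hs₂, mul_one, mul_one]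
    exact (Complex.exp_mul_ofReal_injective hlam_re).ne hs

theorem stmt13 {X : Type*} [MetricSpace X] (S : ℝ → X → X)
    (hS0 : ∀ x, S 0 x = x)
    (hSadd : ∀ s t : ℝ, ∀ x, S (t + s) x = S t (S s x))
    (hScont : Continuous fun p : ℝ × X => S p.1 p.2)
    (T : ℝ) (hT : 0 < T) (Γ : Set X)
    (hΓ : nonrecurrent S T Γ)
    (Λ : Set ℂ) (h0 : (0 : ℂ) ∈ Λ) (hre : ∃ z ∈ Λ, z.re ≠ 0) :
    ∀ x₁ ∈ flowImage S T Γ, ∀ x₂ ∈ flowImage S T Γ, x₁ ≠ x₂ →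
      ∃ lam ∈ Λ, ∃ g : Γ → ℂ, Continuous g ∧
        ∃ φ : X → ℂ, IsEigOn S T Γ lam g φ ∧ φ x₁ ≠ φ x₂ :=
  stmt13_general S hS0 hSadd T Γ hΓ Λ h0 hre
end

section
/- Let Γ ⊆ X be non-recurrent, let A be an n × n complex matrix, and let g : Γ → ℂⁿ. Then there exists a unique function ψ : X_T → ℂⁿ such that ψ(S(s, x₀)) = exp(s·A) · g(x₀) for all x₀ ∈ Γ and s ∈ [0,T], where exp denotes the matrix exponential. Moreover ψ satisfies ψ(S(t, S(s, x₀))) = exp(t·A) · ψ(S(s, x₀)) for all x₀ ∈ Γ and all s ≥ 0, t ≥ 0 with s + t ≤ T. (Taking A to be a Jordan block J_λ yields the generalized eigenfunctions of the Koopman operator.) -/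
theorem Matrix.exp_add_smul {m 𝕂 : Type*} [Fintype m] [DecidableEq m] [RCLike 𝕂]
    (a b : 𝕂) (A : Matrix m m 𝕂) :
    NormedSpace.exp ((a + b) • A) = NormedSpace.exp (a • A) * NormedSpace.exp (b • A) := by
  rw [add_smul]
  exact Matrix.exp_add_of_commute _ _ (((Commute.refl A).smul_left a).smul_right b)

section Flow

variable {X : Type*} {S : ℝ → X → X}
  (hS0 : ∀ x, S 0 x = x) (hSadd : ∀ s t : ℝ, ∀ x, S (t + s) x = S t (S s x))
include hS0 hSadd

theorem flow_neg_flow (s : ℝ) (x : X) : S (-s) (S s x) = x := by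
  rw [← hSadd, neg_add_cancel, hS0]

theorem flow_injective (s : ℝ) : Function.Injective (S s) := fun x y hxy => by
  rw [← flow_neg_flow hS0 hSadd s x, hxy, flow_neg_flow hS0 hSadd]

theorem nonrecurrent.flow_ne_of_lt {T : ℝ} {Γ : Set X} (hΓ : nonrecurrent S T Γ)
    {s s' : ℝ} (hs : 0 ≤ s) (hs' : s' ≤ T) (hlt : s < s') {x x' : X} (hx : x ∈ Γ)
    (hx' : x' ∈ Γ) : S s x ≠ S s' x' := fun heq => by
  have hreturn : x = S (s' - s) x' := by
    rw [← flow_neg_flow hS0 hSadd s x, heq, ← hSadd]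
    ring_nf
  exact hΓ x' hx' (s' - s) (by linarith) (by linarith) (hreturn ▸ hx)

theorem nonrecurrent.injective_flow_s16 {T : ℝ} {Γ : Set X} (hΓ : nonrecurrent S T Γ) :
    Function.Injective fun p : Set.Icc (0:ℝ) T × Γ => S p.1 p.2 := by
  rintro ⟨⟨s, hs⟩, ⟨x, hx⟩⟩ ⟨⟨s', hs'⟩, ⟨x', hx'⟩⟩ (heq : S s x = S s' x')
  rcases lt_trichotomy s s' with hlt | rfl | hgt
  · exact absurd heq (hΓ.flow_ne_of_lt hS0 hSadd hs.1 hs'.2 hlt hx hx')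
  · obtain rfl : x = x' := flow_injective hS0 hSadd s heq
    rfl
  · exact absurd heq.symm (hΓ.flow_ne_of_lt hS0 hSadd hs'.1 hs.2 hgt hx' hx)

end Flow

theorem stmt16_general {X : Type*} (S : ℝ → X → X)
    (hS0 : ∀ x, S 0 x = x)
    (hSadd : ∀ s t : ℝ, ∀ x, S (t + s) x = S t (S s x))
    (T : ℝ) (Γ : Set X)
    (hΓ : nonrecurrent S T Γ)
    {n : ℕ} (A : Matrix (Fin n) (Fin n) ℂ) (g : Γ → Fin n → ℂ) :
    -- existence of `ψ` with `ψ(S(s, x₀)) = exp(s • A) ⬝ g(x₀)` on `Γ × [0, T]`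
    (∃ ψ : X → Fin n → ℂ, ∀ (x₀ : Γ) (s : ℝ), s ∈ Set.Icc (0:ℝ) T →
        ψ (S s (x₀ : X)) = (NormedSpace.exp ((s : ℂ) • A)).mulVec (g x₀)) ∧
    -- uniqueness on `X_T`
    (∀ ψ ψ' : X → Fin n → ℂ,
      (∀ (x₀ : Γ) (s : ℝ), s ∈ Set.Icc (0:ℝ) T →
        ψ (S s (x₀ : X)) = (NormedSpace.exp ((s : ℂ) • A)).mulVec (g x₀)) →
      (∀ (x₀ : Γ) (s : ℝ), s ∈ Set.Icc (0:ℝ) T →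
        ψ' (S s (x₀ : X)) = (NormedSpace.exp ((s : ℂ) • A)).mulVec (g x₀)) →
      ∀ x ∈ flowImage S T Γ, ψ x = ψ' x) ∧
    -- the Koopman relation for generalized eigenfunctions
    (∀ ψ : X → Fin n → ℂ,
      (∀ (x₀ : Γ) (s : ℝ), s ∈ Set.Icc (0:ℝ) T →
        ψ (S s (x₀ : X)) = (NormedSpace.exp ((s : ℂ) • A)).mulVec (g x₀)) →
      ∀ (x₀ : Γ) (s t : ℝ), 0 ≤ s → 0 ≤ t → s + t ≤ T →
        ψ (S t (S s (x₀ : X))) =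
          (NormedSpace.exp ((t : ℂ) • A)).mulVec (ψ (S s (x₀ : X)))) := by
  refine ⟨?existence, ?uniqueness, ?koopman⟩
  case existence =>
    refine ⟨Function.extend (fun p : Set.Icc (0:ℝ) T × Γ => S p.1 p.2)
      (fun p => (NormedSpace.exp ((p.1 : ℂ) • A)).mulVec (g p.2)) 0, fun x₀ s hs => ?_⟩
    exact (hΓ.injective_flow_s16 hS0 hSadd).extend_apply _ _ (⟨s, hs⟩, x₀)
  case uniqueness =>
    rintro ψ ψ' hψ hψ' x ⟨s, hs, x₀, hx₀, rfl⟩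
    rw [hψ ⟨x₀, hx₀⟩ s hs, hψ' ⟨x₀, hx₀⟩ s hs]
  case koopman =>
    intro ψ hψ x₀ s t hs ht hst
    rw [← hSadd, hψ x₀ (t + s) ⟨by linarith, by linarith⟩, hψ x₀ s ⟨hs, by linarith⟩,
      Complex.ofReal_add, Matrix.exp_add_smul, Matrix.mulVec_mulVec]

theorem stmt16 {X : Type*} [MetricSpace X] (S : ℝ → X → X)
    (hS0 : ∀ x, S 0 x = x)
    (hSadd : ∀ s t : ℝ, ∀ x, S (t + s) x = S t (S s x))
    (hScont : Continuous fun p : ℝ × X => S p.1 p.2)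
    (T : ℝ) (hT : 0 < T) (Γ : Set X)
    (hΓ : nonrecurrent S T Γ)
    {n : ℕ} (A : Matrix (Fin n) (Fin n) ℂ) (g : Γ → Fin n → ℂ) :
    -- existence of `ψ` with `ψ(S(s, x₀)) = exp(s • A) ⬝ g(x₀)` on `Γ × [0, T]`
    (∃ ψ : X → Fin n → ℂ, ∀ (x₀ : Γ) (s : ℝ), s ∈ Set.Icc (0:ℝ) T →
        ψ (S s (x₀ : X)) = (NormedSpace.exp ((s : ℂ) • A)).mulVec (g x₀)) ∧
    -- uniqueness on `X_T`
    (∀ ψ ψ' : X → Fin n → ℂ,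
      (∀ (x₀ : Γ) (s : ℝ), s ∈ Set.Icc (0:ℝ) T →
        ψ (S s (x₀ : X)) = (NormedSpace.exp ((s : ℂ) • A)).mulVec (g x₀)) →
      (∀ (x₀ : Γ) (s : ℝ), s ∈ Set.Icc (0:ℝ) T →
        ψ' (S s (x₀ : X)) = (NormedSpace.exp ((s : ℂ) • A)).mulVec (g x₀)) →
      ∀ x ∈ flowImage S T Γ, ψ x = ψ' x) ∧
    -- the Koopman relation for generalized eigenfunctions
    (∀ ψ : X → Fin n → ℂ,
      (∀ (x₀ : Γ) (s : ℝ), s ∈ Set.Icc (0:ℝ) T →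
        ψ (S s (x₀ : X)) = (NormedSpace.exp ((s : ℂ) • A)).mulVec (g x₀)) →
      ∀ (x₀ : Γ) (s t : ℝ), 0 ≤ s → 0 ≤ t → s + t ≤ T →
        ψ (S t (S s (x₀ : X))) =
          (NormedSpace.exp ((t : ℂ) • A)).mulVec (ψ (S s (x₀ : X)))) :=
  stmt16_general S hS0 hSadd T Γ hΓ A g
end
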